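/- arXiv:2512.01820 — 3 statements merged into one kernel-verified Lean document; each statement's English description precedes it below -/
import Mathlib

section
/- The scheduler g* satisfies g*(0) = 0, g*(T) = T', and F(g*) = (1 − exp(−T'))²/T. -/
open Set MeasureTheory

/-- The scheduling functional `F(g) := ∫₀^T (g'(t))² · exp(−2·g(t)) dt`,
where the derivative is taken within `[0, T]`. -/
noncomputable def schedF (T : ℝ) (g : ℝ → ℝ) : ℝ :=
  ∫ t in (0:ℝ)..T, (derivWithin g (Set.Icc 0 T) t) ^ 2 * Real.exp (-2 * g t)

/-!
Substituting `u = exp (-g)` turns the integrand `g'² · exp (-2g)` into `u'²`. The scheduler `g*` is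
exactly the one for which `u` is the affine interpolation between `u(0) = 1` and `u(T) = exp (-T')`,
so its integrand is the constant `((1 - exp (-T')) / T)²`.
-/

open Real

theorem schedF_eq_integral_sq_derivWithin_exp_neg {T : ℝ} (hT : 0 < T) {g : ℝ → ℝ}
    (hg : DifferentiableOn ℝ g (Icc 0 T)) :
    schedF T g = ∫ t in (0:ℝ)..T, derivWithin (fun t => exp (-g t)) (Icc 0 T) t ^ 2 := by
  refine intervalIntegral.integral_congr fun t ht => ?_
  rw [uIcc_of_le hT.le] at ht
  have hderiv : derivWithin (fun t => exp (-g t)) (Icc 0 T) t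
      = exp (-g t) * -derivWithin g (Icc 0 T) t :=
    ((hg t ht).hasDerivWithinAt.neg.exp).derivWithin (uniqueDiffOn_Icc hT t ht)
  have hexp : exp (-2 * g t) = exp (-g t) ^ 2 := by
    rw [← exp_nat_mul]; ring_nf
  simp only [hderiv, hexp]
  ring

theorem schedF_eq_of_exp_neg_eqOn_affine {T : ℝ} (hT : 0 < T) {g : ℝ → ℝ} {a b : ℝ}
    (h : EqOn (fun t => exp (-g t)) (fun t => a + b * t) (Icc 0 T)) :
    schedF T g = T * b ^ 2 := by
  have hpos : ∀ t ∈ Icc 0 T, 0 < a + b * t := fun t ht =>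
    (exp_pos (-g t)).trans_eq (h ht)
  have hg : DifferentiableOn ℝ g (Icc 0 T) := by
    refine DifferentiableOn.congr (f := fun t => -log (a + b * t)) ?_ fun t ht => ?_
    · exact fun t ht => ((((differentiableAt_id.const_mul b).const_add a).log
        (hpos t ht).ne').neg).differentiableWithinAt
    · simp only [← h ht, log_exp, neg_neg]
  rw [schedF_eq_integral_sq_derivWithin_exp_neg hT hg]
  have hderiv : ∀ t ∈ uIcc 0 T, derivWithin (fun t => exp (-g t)) (Icc 0 T) t ^ 2 = b ^ 2 := by
    intro t ht
    rw [uIcc_of_le hT.le] at ht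
    have hline : HasDerivAt (fun t => a + b * t) b t := by
      simpa using ((hasDerivAt_id t).const_mul b).const_add a
    rw [derivWithin_congr h (h ht), hline.hasDerivWithinAt.derivWithin (uniqueDiffOn_Icc hT t ht)]
  rw [intervalIntegral.integral_congr hderiv, intervalIntegral.integral_const, smul_eq_mul,
    sub_zero]

theorem stmt_2_general (T T' : ℝ) (hT : 0 < T)
    (gstar : ℝ → ℝ)
    (hgstar : ∀ t, gstar t = -Real.log (1 - t * (1 - Real.exp (-T')) / T)) :
    gstar 0 = 0 ∧ gstar T = T' ∧ schedF T gstar = (1 - Real.exp (-T')) ^ 2 / T := by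
  set c := 1 - exp (-T')
  have hend : 1 - T * c / T = exp (-T') := by field_simp; ring
  -- `1 - t c / T` is a convex combination of `1` and `exp (-T')`
  have hpos : ∀ t ∈ Icc 0 T, 0 < 1 - t * c / T := by
    intro t ⟨ht0, htT⟩
    have hs : 1 - t * c / T = (1 - t / T) + t / T * exp (-T') := by ring
    have h1 : t / T ≤ 1 := (div_le_one hT).2 htT
    have h0 : 0 ≤ t / T := div_nonneg ht0 hT.le
    nlinarith [exp_pos (-T'), mul_nonneg h0 (exp_pos (-T')).le]
  have haffine : EqOn (fun t => exp (-gstar t)) (fun t => 1 + -(c / T) * t) (Icc 0 T) := by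
    intro t ht
    simp only [hgstar, neg_neg, exp_log (hpos t ht)]
    ring
  refine ⟨by simp [hgstar], by rw [hgstar, hend, log_exp, neg_neg], ?_⟩
  rw [schedF_eq_of_exp_neg_eqOn_affine hT haffine]
  field_simp

/-- The scheduler `g*` satisfies `g*(0) = 0`, `g*(T) = T'`, and
`F(g*) = (1 − exp(−T'))²/T`. -/
theorem stmt_2 (T T' : ℝ) (hT : 0 < T) (hT' : 0 < T')
    (gstar : ℝ → ℝ)
    (hgstar : ∀ t, gstar t = -Real.log (1 - t * (1 - Real.exp (-T')) / T)) :
    gstar 0 = 0 ∧ gstar T = T' ∧ schedF T gstar = (1 - Real.exp (-T')) ^ 2 / T :=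
  stmt_2_general T T' hT gstar hgstar
end

section
/- For all x, v ∈ ℝ^d, the second directional derivative of log p_t satisfies |D²(log p_t)(x)[v,v]| ≤ ( 1/(1 − e^{−2t}) + e^{−2t}·(max_{i,j} ‖x_i − x_j‖²)/(1 − e^{−2t})² )·‖v‖². In particular, although the empirical initial measure is singular, the Hessian of the log-density of the Ornstein–Uhlenbeck flow at any time t ≥ δ > 0 is bounded in operator norm by a constant depending only on δ, t and the diameter max_{i,j} ‖x_i − x_j‖ of the data, independently of the dimension d. -/
/-!
On the line `s ↦ x + s • v`, `log p_t` is the logarithm of `∑ cᵢ exp ψᵢ(s)` with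
`ψᵢ(s) = -‖x + s • v - μᵢ‖² / (2σ²)`, where `μᵢ = e^{-t} xᵢ` and `σ² = 1 - e^{-2t}`.
All `ψᵢ` have the same second derivative `-‖v‖²/σ²`, so the second derivative of the
log-sum-exp is `-‖v‖²/σ²` plus the variance of the slopes `ψᵢ'(0)` under the softmax weights.
By Lagrange's identity that variance is at most half the largest squared difference of two
slopes, and `ψᵢ'(0) - ψⱼ'(0) = ⟪μᵢ - μⱼ, v⟫/σ²`.
-/

open Real Finset

section LineRestriction

variable {𝕜 E F : Type*} [NontriviallyNormedField 𝕜] [NormedAddCommGroup E] [NormedSpace 𝕜 E]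
  [NormedAddCommGroup F] [NormedSpace 𝕜 F]

theorem iteratedFDeriv_apply_const_eq_iteratedDeriv_line {n : WithTop ℕ∞} {f : E → F}
    (hf : ContDiff 𝕜 n f) {k : ℕ} (hk : k ≤ n) (x v : E) :
    iteratedFDeriv 𝕜 k f x (fun _ => v) = iteratedDeriv k (fun s : 𝕜 => f (x + s • v)) 0 := by
  have hline : (fun s : 𝕜 => f (x + s • v)) =
      (fun z => f (x + z)) ∘ ContinuousLinearMap.smulRight (1 : 𝕜 →L[𝕜] 𝕜) v := by
    ext s; simp
  have hf' : ContDiff 𝕜 n fun z => f (x + z) := hf.comp (contDiff_const.add contDiff_id)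
  rw [iteratedDeriv_eq_iteratedFDeriv, hline,
    ContinuousLinearMap.iteratedFDeriv_comp_right _ hf' _ hk, iteratedFDeriv_comp_add_left]
  simp

end LineRestriction

theorem deriv_deriv_log {G G' : ℝ → ℝ} {G'' s : ℝ} (hG : ∀ t, HasDerivAt G (G' t) t)
    (hG0 : ∀ t, G t ≠ 0) (hG' : HasDerivAt G' G'' s) :
    deriv (deriv fun t => log (G t)) s = G'' / G s - (G' s / G s) ^ 2 := by
  have hderiv : deriv (fun t => log (G t)) = fun t => G' t / G t :=
    funext fun t => ((hG t).log (hG0 t)).deriv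
  rw [hderiv, (hG'.fun_div (hG s) (hG0 s)).deriv]
  field_simp

section WeightedSums

variable {ι : Type*} [Fintype ι]

theorem sum_sum_mul_mul_sub_sq_eq (w b : ι → ℝ) :
    ∑ i, ∑ j, w i * w j * (b i - b j) ^ 2 =
      2 * ((∑ i, w i) * ∑ i, w i * b i ^ 2 - (∑ i, w i * b i) ^ 2) := by
  have hexpand : ∀ i j, w i * w j * (b i - b j) ^ 2 =
      w i * b i ^ 2 * w j + w i * (w j * b j ^ 2) - 2 * (w i * b i) * (w j * b j) :=
    fun i j => by ring
  simp only [hexpand, sum_add_distrib, sum_sub_distrib, ← mul_sum, ← sum_mul]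
  ring

theorem sum_sum_mul_mul_sub_sq_le {w b : ι → ℝ} {K : ℝ} (hw : ∀ i, 0 ≤ w i)
    (hb : ∀ i j, (b i - b j) ^ 2 ≤ K) :
    ∑ i, ∑ j, w i * w j * (b i - b j) ^ 2 ≤ K * (∑ i, w i) ^ 2 :=
  calc ∑ i, ∑ j, w i * w j * (b i - b j) ^ 2 ≤ ∑ i, ∑ j, w i * w j * K :=
        sum_le_sum fun i _ => sum_le_sum fun j _ =>
          mul_le_mul_of_nonneg_left (hb i j) (mul_nonneg (hw i) (hw j))
    _ = K * (∑ i, w i) ^ 2 := by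
        rw [sq, sum_mul_sum, mul_sum]
        exact sum_congr rfl fun i _ => by rw [mul_sum]; exact sum_congr rfl fun j _ => by ring

end WeightedSums

section LogSumExp

variable {ι : Type*} [Fintype ι] (c : ι → ℝ) {ψ ψ' : ι → ℝ → ℝ} {ψ'' : ι → ℝ} {s : ℝ}

theorem hasDerivAt_sum_mul_exp (hψ : ∀ i, HasDerivAt (ψ i) (ψ' i s) s) :
    HasDerivAt (fun t => ∑ i, c i * exp (ψ i t)) (∑ i, c i * exp (ψ i s) * ψ' i s) s := by
  simpa only [mul_assoc] using HasDerivAt.fun_sum fun i _ => ((hψ i).exp.const_mul (c i))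

theorem hasDerivAt_sum_mul_exp_mul (hψ : ∀ i, HasDerivAt (ψ i) (ψ' i s) s)
    (hψ' : ∀ i, HasDerivAt (ψ' i) (ψ'' i) s) :
    HasDerivAt (fun t => ∑ i, c i * exp (ψ i t) * ψ' i t)
      (∑ i, c i * exp (ψ i s) * (ψ' i s ^ 2 + ψ'' i)) s := by
  refine (HasDerivAt.fun_sum fun i _ => ((hψ i).exp.const_mul (c i)).mul (hψ' i)).congr_deriv ?_
  exact sum_congr rfl fun i _ => by ring

theorem deriv_deriv_log_sum_mul_exp [Nonempty ι] (hc : ∀ i, 0 < c i)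
    (hψ : ∀ i t, HasDerivAt (ψ i) (ψ' i t) t) (hψ' : ∀ i, HasDerivAt (ψ' i) (ψ'' i) s) :
    deriv (deriv fun t => log (∑ i, c i * exp (ψ i t))) s =
      (∑ i, ∑ j, c i * exp (ψ i s) * (c j * exp (ψ j s)) * (ψ' i s - ψ' j s) ^ 2) /
          (2 * (∑ i, c i * exp (ψ i s)) ^ 2) +
        (∑ i, c i * exp (ψ i s) * ψ'' i) / ∑ i, c i * exp (ψ i s) := by
  have hpos : ∀ t, 0 < ∑ i, c i * exp (ψ i t) := fun t =>
    sum_pos (fun i _ => mul_pos (hc i) (exp_pos _)) univ_nonempty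
  rw [deriv_deriv_log (fun t => hasDerivAt_sum_mul_exp c fun i => hψ i t)
    (fun t => (hpos t).ne') (hasDerivAt_sum_mul_exp_mul c (fun i => hψ i s) hψ'),
    sum_sum_mul_mul_sub_sq_eq]
  have := (hpos s).ne'
  field_simp
  simp only [mul_add, sum_add_distrib]
  ring

theorem deriv_deriv_log_sum_mul_exp_mem_Icc [Nonempty ι] (hc : ∀ i, 0 < c i) {κ K : ℝ}
    (hψ : ∀ i t, HasDerivAt (ψ i) (ψ' i t) t) (hψ' : ∀ i, HasDerivAt (ψ' i) κ s)
    (hK : ∀ i j, (ψ' i s - ψ' j s) ^ 2 ≤ K) :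
    deriv (deriv fun t => log (∑ i, c i * exp (ψ i t))) s ∈ Set.Icc κ (κ + K / 2) := by
  rw [deriv_deriv_log_sum_mul_exp c (ψ'' := fun _ => κ) hc hψ hψ']
  obtain ⟨w, hw_def⟩ : ∃ w : ι → ℝ, ∀ i, c i * exp (ψ i s) = w i := ⟨_, fun i => rfl⟩
  simp only [hw_def]
  have hw : ∀ i, 0 < w i := fun i => hw_def i ▸ mul_pos (hc i) (exp_pos _)
  have hW : 0 < ∑ i, w i := sum_pos (fun i _ => hw i) univ_nonempty
  have hcurv : (∑ i, w i * κ) / ∑ i, w i = κ := by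
    rw [← sum_mul, mul_div_right_comm, div_self hW.ne', one_mul]
  have hvar_nonneg : 0 ≤ (∑ i, ∑ j, w i * w j * (ψ' i s - ψ' j s) ^ 2) / (2 * (∑ i, w i) ^ 2) :=
    div_nonneg (sum_nonneg fun i _ => sum_nonneg fun j _ =>
      mul_nonneg (mul_pos (hw i) (hw j)).le (sq_nonneg _)) (by positivity)
  have hvar_le : (∑ i, ∑ j, w i * w j * (ψ' i s - ψ' j s) ^ 2) / (2 * (∑ i, w i) ^ 2) ≤ K / 2 := by
    rw [div_le_iff₀ (by positivity)]
    exact (sum_sum_mul_mul_sub_sq_le (fun i => (hw i).le) hK).trans_eq (by field_simp)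
  rw [hcurv]
  constructor <;> linarith

end LogSumExp

section GaussianMixture

variable {E ι : Type*} [NormedAddCommGroup E] [InnerProductSpace ℝ E] [Fintype ι]

noncomputable def gaussianMixture (c : ι → ℝ) (μ : ι → E) (σ2 : ℝ) (y : E) : ℝ :=
  ∑ i, c i * exp (-‖y - μ i‖ ^ 2 / (2 * σ2))

theorem contDiff_log_gaussianMixture [Nonempty ι] {c : ι → ℝ} (hc : ∀ i, 0 < c i) (μ : ι → E)
    (σ2 : ℝ) {n : WithTop ℕ∞} : ContDiff ℝ n fun y => log (gaussianMixture c μ σ2 y) := by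
  refine ContDiff.log ?_ fun y => (sum_pos (fun i _ => mul_pos (hc i) (exp_pos _))
    univ_nonempty).ne'
  exact ContDiff.sum fun i _ => contDiff_const.mul
    (((contDiff_id.sub contDiff_const).norm_sq ℝ).neg.div_const _).exp

theorem hasDerivAt_gaussian_exponent_line (x v μ : E) (σ2 s : ℝ) :
    HasDerivAt (fun t : ℝ => -‖x + t • v - μ‖ ^ 2 / (2 * σ2))
      (-inner ℝ (x + s • v - μ) v / σ2) s := by
  have h := ((((hasDerivAt_id s).smul_const v).const_add x).sub_const μ).norm_sq.neg.div_const
    (2 * σ2)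
  refine h.congr_deriv ?_
  simp only [id, one_smul]
  field_simp

theorem hasDerivAt_gaussian_slope_line (x v μ : E) (σ2 s : ℝ) :
    HasDerivAt (fun t : ℝ => -inner ℝ (x + t • v - μ) v / σ2) (-‖v‖ ^ 2 / σ2) s := by
  have h := ((((hasDerivAt_id s).smul_const v).const_add x).sub_const μ).inner ℝ
    (hasDerivAt_const s v) |>.neg.div_const σ2
  refine h.congr_deriv ?_
  simp

theorem sq_neg_inner_div_sub_le {x v μ₁ μ₂ : E} {σ2 M : ℝ} (hσ2 : 0 < σ2)
    (hM : ‖μ₁ - μ₂‖ ^ 2 ≤ M) :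
    (-inner ℝ (x - μ₁) v / σ2 - -inner ℝ (x - μ₂) v / σ2) ^ 2 ≤ M * ‖v‖ ^ 2 / σ2 ^ 2 := by
  rw [div_sub_div_same, neg_sub_neg, ← inner_sub_left, sub_sub_sub_cancel_left, div_pow]
  gcongr
  calc inner ℝ (μ₁ - μ₂) v ^ 2 ≤ (‖μ₁ - μ₂‖ * ‖v‖) ^ 2 := by
        rw [← sq_abs]; gcongr; exact abs_real_inner_le_norm _ _
    _ ≤ M * ‖v‖ ^ 2 := by rw [mul_pow]; gcongr

theorem abs_iteratedFDeriv_two_log_gaussianMixture_le [Nonempty ι] {c : ι → ℝ}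
    (hc : ∀ i, 0 < c i) (μ : ι → E) {σ2 M : ℝ} (hσ2 : 0 < σ2)
    (hM : ∀ i j, ‖μ i - μ j‖ ^ 2 ≤ M) (x v : E) :
    |iteratedFDeriv ℝ 2 (fun y => log (gaussianMixture c μ σ2 y)) x ![v, v]| ≤
      (1 / σ2 + M / (2 * σ2 ^ 2)) * ‖v‖ ^ 2 := by
  have hvv : ![v, v] = fun _ => v := by ext i; fin_cases i <;> rfl
  rw [hvv, iteratedFDeriv_apply_const_eq_iteratedDeriv_line
      (contDiff_log_gaussianMixture hc μ σ2 (n := 2)) le_rfl,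
    iteratedDeriv_succ, iteratedDeriv_one]
  have hmem := deriv_deriv_log_sum_mul_exp_mem_Icc c hc
    (fun i t => hasDerivAt_gaussian_exponent_line x v (μ i) σ2 t)
    (fun i => hasDerivAt_gaussian_slope_line x v (μ i) σ2 0)
    (K := M * ‖v‖ ^ 2 / σ2 ^ 2) fun i j => by
      simpa only [zero_smul, add_zero] using sq_neg_inner_div_sub_le hσ2 (hM i j)
  have hbound : (1 / σ2 + M / (2 * σ2 ^ 2)) * ‖v‖ ^ 2 =
      ‖v‖ ^ 2 / σ2 + M * ‖v‖ ^ 2 / σ2 ^ 2 / 2 := by ring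
  have hv : 0 ≤ ‖v‖ ^ 2 / σ2 := by positivity
  rw [hbound, abs_le]
  simp only [gaussianMixture, Set.mem_Icc, neg_div] at hmem ⊢
  obtain ⟨hlower, hupper⟩ := hmem
  constructor <;> linarith

end GaussianMixture

theorem stmt_10_general (d N : ℕ)
    (t : ℝ) (ht : 0 < t)
    (xdata : Fin N → EuclideanSpace ℝ (Fin d))
    (p : EuclideanSpace ℝ (Fin d) → ℝ)
    (hp : ∀ x, p x = (1 / N : ℝ) *
      ∑ i, Real.exp (-‖x - Real.exp (-t) • xdata i‖ ^ 2 / (2 * (1 - Real.exp (-2 * t)))))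
    (D2 : ℝ) (hD2 : IsGreatest {r : ℝ | ∃ i j, r = ‖xdata i - xdata j‖ ^ 2} D2) :
    ∀ x v : EuclideanSpace ℝ (Fin d),
      |iteratedFDeriv ℝ 2 (fun y => Real.log (p y)) x ![v, v]|
        ≤ (1 / (1 - Real.exp (-2 * t)) +
            Real.exp (-2 * t) * D2 / (1 - Real.exp (-2 * t)) ^ 2) * ‖v‖ ^ 2 := by
  intro x v
  obtain ⟨⟨i₀, _, hD2_eq⟩, hD2_max⟩ := hD2
  have : Nonempty (Fin N) := ⟨i₀⟩
  have hσ2 : 0 < 1 - exp (-2 * t) := sub_pos.2 (exp_lt_one_iff.2 (by linarith))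
  have hM : 0 ≤ exp (-2 * t) * D2 := by rw [hD2_eq]; positivity
  have hdist : ∀ i j, ‖exp (-t) • xdata i - exp (-t) • xdata j‖ ^ 2 ≤ exp (-2 * t) * D2 := by
    intro i j
    rw [← smul_sub, norm_smul, mul_pow, norm_of_nonneg (exp_pos _).le, ← exp_nat_mul,
      show ((2 : ℕ) : ℝ) * -t = -2 * t by push_cast; ring]
    exact mul_le_mul_of_nonneg_left (hD2_max ⟨i, j, rfl⟩) (exp_pos _).le
  obtain rfl : p = gaussianMixture (fun _ => 1 / N) (fun i => exp (-t) • xdata i)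
      (1 - exp (-2 * t)) := funext fun y => by rw [hp, gaussianMixture, mul_sum]
  refine (abs_iteratedFDeriv_two_log_gaussianMixture_le
    (fun _ => one_div_pos.2 (Nat.cast_pos.2 i₀.pos)) _ hσ2 hdist x v).trans ?_
  gcongr
  exact le_mul_of_one_le_left (sq_nonneg _) one_le_two

/-- For the (unnormalized) Gaussian-mixture density
`p_t(x) = (1/N)·Σ_i exp(−‖x − e^{−t}·x_i‖²/(2·(1 − e^{−2t})))` at time `t > 0` of the
Ornstein–Uhlenbeck flow started from the empirical measure of `x₁, …, x_N ∈ ℝ^d`,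
the second directional derivative of `log p_t` satisfies, for all `x, v ∈ ℝ^d`,
`|D²(log p_t)(x)[v,v]| ≤ (1/(1 − e^{−2t}) + e^{−2t}·(max_{i,j} ‖x_i − x_j‖²)/(1 − e^{−2t})²)·‖v‖²`,
independently of the dimension `d`. -/
theorem stmt_10 (d N : ℕ) (hd : 1 ≤ d) (hN : 1 ≤ N)
    (t : ℝ) (ht : 0 < t)
    (xdata : Fin N → EuclideanSpace ℝ (Fin d))
    (p : EuclideanSpace ℝ (Fin d) → ℝ)
    (hp : ∀ x, p x = (1 / N : ℝ) *
      ∑ i, Real.exp (-‖x - Real.exp (-t) • xdata i‖ ^ 2 / (2 * (1 - Real.exp (-2 * t)))))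
    (D2 : ℝ) (hD2 : IsGreatest {r : ℝ | ∃ i j, r = ‖xdata i - xdata j‖ ^ 2} D2) :
    ∀ x v : EuclideanSpace ℝ (Fin d),
      |iteratedFDeriv ℝ 2 (fun y => Real.log (p y)) x ![v, v]|
        ≤ (1 / (1 - Real.exp (-2 * t)) +
            Real.exp (-2 * t) * D2 / (1 - Real.exp (-2 * t)) ^ 2) * ‖v‖ ^ 2 :=
  stmt_10_general d N t ht xdata p hp D2 hD2
end

section
/- Under these hypotheses, |U(T, m_0) − U(0, m_T)| ≤ λ·M·√T·ε. (This is the score-mismatch estimate for the two-state generative model: the change of the backward-Kolmogorov value function U along the time-reversed forward marginals is controlled by the score-matching error ε.) -/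
open Set MeasureTheory

/-!
Follow the value function along the time-reversed forward curve, `g t = U (T - t) m_t`.
By the chain rule and the backward Kolmogorov equation, `g'` vanishes when `s* = s`: the exact
score turns the reversed generator into the forward one. In general
`g' t = (λ/2) (∂₀U - ∂₁U) ((s - s*)_t(1) m_t(1) - (s - s*)_t(0) m_t(0))`, so
`|g'| ≤ λ M ∑ᵢ |s - s*|_t(i) m_t(i)`. Since `m_t` is a probability vector, Jensen and
Cauchy–Schwarz in time bound the integral of the right-hand side by `λ M √T ε`.
-/

theorem sq_integral_le_mul_integral_sq {f : ℝ → ℝ} {a b : ℝ} (hab : a ≤ b)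
    (hf : IntervalIntegrable f volume a b)
    (hf2 : IntervalIntegrable (fun x => f x ^ 2) volume a b) :
    (∫ x in a..b, f x) ^ 2 ≤ (b - a) * ∫ x in a..b, f x ^ 2 := by
  have hquad (c : ℝ) :
      0 ≤ (b - a) * (c * c) + (-2 * ∫ x in a..b, f x) * c + ∫ x in a..b, f x ^ 2 := by
    have hexp : ∫ x in a..b, (f x - c) ^ 2
        = (b - a) * (c * c) + (-2 * ∫ x in a..b, f x) * c + ∫ x in a..b, f x ^ 2 := by
      have h : (fun x => (f x - c) ^ 2) = fun x => f x ^ 2 + ((-2 * c) * f x + c ^ 2) := by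
        funext x; ring
      rw [h, intervalIntegral.integral_add hf2 ((hf.const_mul _).add intervalIntegrable_const),
        intervalIntegral.integral_add (hf.const_mul _) intervalIntegrable_const,
        intervalIntegral.integral_const_mul, intervalIntegral.integral_const, smul_eq_mul]
      ring
    exact hexp ▸ intervalIntegral.integral_nonneg hab fun x _ => sq_nonneg _
  have := discrim_le_zero hquad
  rw [discrim] at this
  linarith

theorem sq_sum_mul_le_sum_sq_mul {ι : Type*} (s : Finset ι) {w d : ι → ℝ}
    (hw : ∀ i ∈ s, 0 ≤ w i) (hw_sum : ∑ i ∈ s, w i = 1) :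
    (∑ i ∈ s, d i * w i) ^ 2 ≤ ∑ i ∈ s, d i ^ 2 * w i := by
  simpa only [smul_eq_mul, mul_comm (w _)] using
    even_two.convexOn_pow.map_sum_le hw hw_sum fun i _ => mem_univ (d i)

theorem integral_sum_abs_mul_le_sqrt_mul {ι : Type*} [Fintype ι] {a b ε : ℝ} (hab : a ≤ b)
    {w d : ℝ → ι → ℝ} (hw : ∀ i, ContinuousOn (fun t => w t i) (Icc a b))
    (hd : ∀ i, ContinuousOn (fun t => d t i) (Icc a b))
    (hw_nonneg : ∀ t ∈ Icc a b, ∀ i, 0 ≤ w t i)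
    (hw_sum : ∀ t ∈ Icc a b, ∑ i, w t i = 1)
    (hε : 0 ≤ ε) (hL2 : ∑ i, ∫ t in a..b, d t i ^ 2 * w t i ≤ ε ^ 2) :
    ∫ t in a..b, ∑ i, |d t i| * w t i ≤ √(b - a) * ε := by
  have hint {f : ℝ → ℝ} (hf : ContinuousOn f (Icc a b)) : IntervalIntegrable f volume a b :=
    hf.intervalIntegrable_of_Icc hab
  have hL1 : ContinuousOn (fun t => ∑ i, |d t i| * w t i) (Icc a b) :=
    continuousOn_finsetSum _ fun i _ => (hd i).abs.mul (hw i)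
  have hsq : ∀ t ∈ Icc a b, (∑ i, |d t i| * w t i) ^ 2 ≤ ∑ i, d t i ^ 2 * w t i :=
    fun t ht => by
      simpa only [sq_abs] using sq_sum_mul_le_sum_sq_mul Finset.univ (d := fun i => |d t i|)
        (fun i _ => hw_nonneg t ht i) (hw_sum t ht)
  have hL2' : ∫ t in a..b, ∑ i, d t i ^ 2 * w t i ≤ ε ^ 2 := by
    rwa [intervalIntegral.integral_finsetSum fun i _ =>
      hint (f := fun t => d t i ^ 2 * w t i) (((hd i).pow 2).mul (hw i))]
  calc ∫ t in a..b, ∑ i, |d t i| * w t i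
      ≤ √((b - a) * ∫ t in a..b, (∑ i, |d t i| * w t i) ^ 2) :=
        (le_abs_self _).trans <| Real.abs_le_sqrt <|
          sq_integral_le_mul_integral_sq hab (hint hL1) (hint (hL1.pow 2))
    _ ≤ √((b - a) * ε ^ 2) := by
        gcongr
        exact (intervalIntegral.integral_mono_on hab (hint (hL1.pow 2))
          (hint (continuousOn_finsetSum _ fun i _ => ((hd i).pow 2).mul (hw i))) hsq).trans hL2'
    _ = √(b - a) * ε := by rw [Real.sqrt_mul (by linarith), Real.sqrt_sq hε]

theorem hasDerivAt_comp_timeReversal {U : ℝ → ℝ → ℝ → ℝ} {T t v₀ v₁ : ℝ} {γ₀ γ₁ : ℝ → ℝ}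
    {S : Set ℝ}
    (hU : DifferentiableAt ℝ (fun q : ℝ × ℝ × ℝ => U q.1 q.2.1 q.2.2) (T - t, γ₀ t, γ₁ t))
    (hS : UniqueDiffWithinAt ℝ S (T - t)) (h₀ : HasDerivAt γ₀ v₀ t) (h₁ : HasDerivAt γ₁ v₁ t) :
    HasDerivAt (fun u => U (T - u) (γ₀ u) (γ₁ u))
      (-derivWithin (fun τ => U τ (γ₀ t) (γ₁ t)) S (T - t)
        + deriv (fun y => U (T - t) y (γ₁ t)) (γ₀ t) * v₀
        + deriv (fun y => U (T - t) (γ₀ t) y) (γ₁ t) * v₁) t := by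
  set D := fderiv ℝ (fun q : ℝ × ℝ × ℝ => U q.1 q.2.1 q.2.2) (T - t, γ₀ t, γ₁ t)
  have hD := hU.hasFDerivAt
  have hA : HasDerivAt (fun τ => U τ (γ₀ t) (γ₁ t)) (D (1, 0, 0)) (T - t) := by
    have hline : HasDerivAt (fun τ : ℝ => (τ, γ₀ t, γ₁ t)) (1, 0, 0) (T - t) :=
      (hasDerivAt_id' _).prodMk ((hasDerivAt_const _ _).prodMk (hasDerivAt_const _ _))
    exact hD.comp_hasDerivAt _ hline
  have hB : HasDerivAt (fun y => U (T - t) y (γ₁ t)) (D (0, 1, 0)) (γ₀ t) := by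
    have hline : HasDerivAt (fun y : ℝ => (T - t, y, γ₁ t)) (0, 1, 0) (γ₀ t) :=
      (hasDerivAt_const _ _).prodMk ((hasDerivAt_id' _).prodMk (hasDerivAt_const _ _))
    exact hD.comp_hasDerivAt _ hline
  have hC : HasDerivAt (fun y => U (T - t) (γ₀ t) y) (D (0, 0, 1)) (γ₁ t) := by
    have hline : HasDerivAt (fun y : ℝ => (T - t, γ₀ t, y)) (0, 0, 1) (γ₁ t) :=
      (hasDerivAt_const _ _).prodMk ((hasDerivAt_const _ _).prodMk (hasDerivAt_id' _))
    exact hD.comp_hasDerivAt _ hline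
  have hcurve : HasDerivAt (fun u => (T - u, γ₀ u, γ₁ u)) (-1, v₀, v₁) t :=
    ((hasDerivAt_id' t).const_sub T).prodMk (h₀.prodMk h₁)
  have hval : D (-1, v₀, v₁) = -D (1, 0, 0) + D (0, 1, 0) * v₀ + D (0, 0, 1) * v₁ := by
    have hsplit : ((-1 : ℝ), v₀, v₁) = (-1 : ℝ) • ((1 : ℝ), (0 : ℝ), (0 : ℝ))
        + v₀ • ((0 : ℝ), (1 : ℝ), (0 : ℝ)) + v₁ • ((0 : ℝ), (0 : ℝ), (1 : ℝ)) := by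
      simp
    rw [hsplit, map_add, map_add, D.map_smul, D.map_smul, D.map_smul, smul_eq_mul, smul_eq_mul,
      smul_eq_mul]
    ring
  rw [hA.hasDerivWithinAt.derivWithin hS, hB.deriv, hC.deriv, ← hval]
  exact hD.comp_hasDerivAt t hcurve

theorem abs_twoState_reversed_deriv_le {lam M A B C x₀ x₁ σ₀ σ₁ σ₀' σ₁' : ℝ}
    (hlam : 0 ≤ lam) (hx₀ : 0 < x₀) (hx₁ : 0 < x₁)
    (hσ₀ : σ₀ = (x₀ - x₁) / x₀) (hσ₁ : σ₁ = (x₁ - x₀) / x₁)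
    (hB : |B| ≤ M) (hC : |C| ≤ M)
    (hPDE : A + lam / 2 * (B * ((1 - σ₁') * x₁ - (1 - σ₀') * x₀)
      + C * ((1 - σ₀') * x₀ - (1 - σ₁') * x₁)) = 0) :
    |-A + B * (lam / 2 * (x₁ - x₀)) + C * (lam / 2 * (x₀ - x₁))|
      ≤ lam * M * (|σ₀ - σ₀'| * x₀ + |σ₁ - σ₁'| * x₁) := by
  have hσ₀x : σ₀ * x₀ = x₀ - x₁ := by rw [hσ₀]; field_simp
  have hσ₁x : σ₁ * x₁ = x₁ - x₀ := by rw [hσ₁]; field_simp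
  -- `(1 - σ₁) x₁ = x₀` and `(1 - σ₀) x₀ = x₁`: only the score error `σ - σ'` survives.
  have hdefect : -A + B * (lam / 2 * (x₁ - x₀)) + C * (lam / 2 * (x₀ - x₁))
      = lam / 2 * (B - C) * ((σ₁ - σ₁') * x₁ - (σ₀ - σ₀') * x₀) := by
    linear_combination -hPDE + lam / 2 * (B - C) * (hσ₀x - hσ₁x)
  have hBC : |B - C| ≤ 2 * M := (abs_sub _ _).trans (by linarith)
  have hR : |(σ₁ - σ₁') * x₁ - (σ₀ - σ₀') * x₀| ≤ |σ₀ - σ₀'| * x₀ + |σ₁ - σ₁'| * x₁ := by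
    refine (abs_sub _ _).trans ?_
    rw [abs_mul, abs_mul, abs_of_pos hx₀, abs_of_pos hx₁, add_comm]
  rw [hdefect, abs_mul, abs_mul, abs_of_nonneg (by positivity : 0 ≤ lam / 2)]
  calc lam / 2 * |B - C| * |(σ₁ - σ₁') * x₁ - (σ₀ - σ₀') * x₀|
      ≤ lam / 2 * (2 * M) * (|σ₀ - σ₀'| * x₀ + |σ₁ - σ₁'| * x₁) := by
        have hM : 0 ≤ M := (abs_nonneg B).trans hB
        gcongr
    _ = lam * M * (|σ₀ - σ₀'| * x₀ + |σ₁ - σ₁'| * x₁) := by ring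

theorem differentiableAt_reversedValue_and_abs_deriv_le {lam T M : ℝ} (hlam : 0 ≤ lam)
    (hT : 0 < T) {m s sstar : ℝ → Fin 2 → ℝ} {U : ℝ → ℝ → ℝ → ℝ}
    (hpos : ∀ t ∈ Icc 0 T, ∀ i, 0 < m t i)
    (hfwd : ∀ t ∈ Icc 0 T, ∀ i : Fin 2,
      HasDerivWithinAt (fun u => m u i) (lam / 2 * (m t (1 - i) - m t i)) (Icc 0 T) t)
    (hs : ∀ t i, s t i = (m t i - m t (1 - i)) / m t i)
    (hU : DifferentiableOn ℝ (fun q : ℝ × ℝ × ℝ => U q.1 q.2.1 q.2.2) (Icc 0 T ×ˢ univ))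
    (hU_bound : ∀ t ∈ Icc 0 T, ∀ x₀ x₁ : ℝ,
      |deriv (fun y => U t y x₁) x₀| ≤ M ∧ |deriv (fun y => U t x₀ y) x₁| ≤ M)
    (hPDE : ∀ t ∈ Icc 0 T, ∀ x₀ x₁ : ℝ,
      derivWithin (fun u => U u x₀ x₁) (Icc 0 T) t +
        lam / 2 *
          (deriv (fun y => U t y x₁) x₀ *
              ((1 - sstar (T - t) 1) * x₁ - (1 - sstar (T - t) 0) * x₀) +
            deriv (fun y => U t x₀ y) x₁ *
              ((1 - sstar (T - t) 0) * x₀ - (1 - sstar (T - t) 1) * x₁)) = 0)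
    {t : ℝ} (ht : t ∈ Ioo 0 T) :
    DifferentiableAt ℝ (fun u => U (T - u) (m u 0) (m u 1)) t ∧
      |deriv (fun u => U (T - u) (m u 0) (m u 1)) t|
        ≤ lam * M * ∑ i, |s t i - sstar t i| * m t i := by
  have hτ : T - t ∈ Ioo 0 T := ⟨by linarith [ht.2], by linarith [ht.1]⟩
  have hm (i : Fin 2) := (hfwd t (Ioo_subset_Icc_self ht) i).hasDerivAt (Icc_mem_nhds ht.1 ht.2)
  have hUt := hU.differentiableAt (x := (T - t, m t 0, m t 1))
    (prod_mem_nhds (Icc_mem_nhds hτ.1 hτ.2) Filter.univ_mem)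
  have hg := hasDerivAt_comp_timeReversal hUt
    (uniqueDiffOn_Icc hT _ (Ioo_subset_Icc_self hτ)) (hm 0) (hm 1)
  refine ⟨hg.differentiableAt, ?_⟩
  have hPDEt := hPDE (T - t) (Ioo_subset_Icc_self hτ) (m t 0) (m t 1)
  rw [sub_sub_cancel] at hPDEt
  have hbound := hU_bound (T - t) (Ioo_subset_Icc_self hτ) (m t 0) (m t 1)
  rw [hg.deriv, Fin.sum_univ_two]
  simpa using abs_twoState_reversed_deriv_le hlam (hpos t (Ioo_subset_Icc_self ht) 0)
    (hpos t (Ioo_subset_Icc_self ht) 1) (by simpa using hs t 0) (by simpa using hs t 1)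
    hbound.1 hbound.2 hPDEt

theorem continuousOn_reversedValue {T : ℝ} {U : ℝ → ℝ → ℝ → ℝ} {γ₀ γ₁ : ℝ → ℝ}
    (hU : ContinuousOn (fun q : ℝ × ℝ × ℝ => U q.1 q.2.1 q.2.2) (Icc 0 T ×ˢ univ))
    (h₀ : ContinuousOn γ₀ (Icc 0 T)) (h₁ : ContinuousOn γ₁ (Icc 0 T)) :
    ContinuousOn (fun t => U (T - t) (γ₀ t) (γ₁ t)) (Icc 0 T) := by
  have hrev : ContinuousOn (fun t : ℝ => T - t) (Icc 0 T) := continuousOn_const.sub continuousOn_id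
  refine hU.comp (hrev.prodMk (h₀.prodMk h₁)) fun t ht =>
    mk_mem_prod ⟨?_, ?_⟩ (mem_univ _) <;> linarith [ht.1, ht.2]

/-- Score-mismatch estimate for the two-state generative model: if `m` is a forward
two-state curve with score `s`, `s*` is a continuous approximate score with
score-matching error at most `ε²`, and `U` is a `C¹` solution of the backward
Kolmogorov equation driven by `s*` whose spatial partial derivatives are bounded
by `M`, then `|U(T, m_0) − U(0, m_T)| ≤ λ·M·√T·ε`. -/
theorem stmt_17 (lam T M ε : ℝ) (hlam : 0 < lam) (hT : 0 < T)
    (hM : 0 ≤ M) (hε : 0 ≤ ε)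
    (m : ℝ → Fin 2 → ℝ)
    (hpos : ∀ t ∈ Set.Icc 0 T, ∀ i, 0 < m t i)
    (hsum : ∀ t ∈ Set.Icc 0 T, m t 0 + m t 1 = 1)
    (hfwd : ∀ t ∈ Set.Icc 0 T, ∀ i : Fin 2,
      HasDerivWithinAt (fun u => m u i) (lam / 2 * (m t (1 - i) - m t i))
        (Set.Icc 0 T) t)
    (s : ℝ → Fin 2 → ℝ)
    (hs : ∀ t i, s t i = (m t i - m t (1 - i)) / m t i)
    (sstar : ℝ → Fin 2 → ℝ)
    (hsstar_cont : ∀ i, ContinuousOn (fun t => sstar t i) (Set.Icc 0 T))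
    (hscore : ∑ i : Fin 2, ∫ t in (0:ℝ)..T, (s t i - sstar t i) ^ 2 * m t i ≤ ε ^ 2)
    (U : ℝ → ℝ → ℝ → ℝ)
    (hU_smooth : ContDiffOn ℝ 1 (fun q : ℝ × ℝ × ℝ => U q.1 q.2.1 q.2.2)
      (Set.Icc 0 T ×ˢ (Set.univ : Set (ℝ × ℝ))))
    (hU_bound : ∀ t ∈ Set.Icc 0 T, ∀ x₀ x₁ : ℝ,
      |deriv (fun y => U t y x₁) x₀| ≤ M ∧ |deriv (fun y => U t x₀ y) x₁| ≤ M)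
    (hPDE : ∀ t ∈ Set.Icc 0 T, ∀ x₀ x₁ : ℝ,
      derivWithin (fun u => U u x₀ x₁) (Set.Icc 0 T) t +
        lam / 2 *
          (deriv (fun y => U t y x₁) x₀ *
              ((1 - sstar (T - t) 1) * x₁ - (1 - sstar (T - t) 0) * x₀) +
            deriv (fun y => U t x₀ y) x₁ *
              ((1 - sstar (T - t) 0) * x₀ - (1 - sstar (T - t) 1) * x₁)) = 0) :
    |U T (m 0 0) (m 0 1) - U 0 (m T 0) (m T 1)| ≤ lam * M * Real.sqrt T * ε := by
  set g : ℝ → ℝ := fun t => U (T - t) (m t 0) (m t 1)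
  have hm (i : Fin 2) : ContinuousOn (fun t => m t i) (Icc 0 T) :=
    fun t ht => (hfwd t ht i).continuousWithinAt
  have hdefect (i : Fin 2) : ContinuousOn (fun t => s t i - sstar t i) (Icc 0 T) := by
    refine ContinuousOn.sub ?_ (hsstar_cont i)
    exact (((hm i).sub (hm (1 - i))).div (hm i) fun t ht => (hpos t ht i).ne').congr
      fun t _ => hs t i
  have hg' (t : ℝ) (ht : t ∈ Ioo 0 T) :=
    differentiableAt_reversedValue_and_abs_deriv_le hlam.le hT hpos hfwd hs
      (hU_smooth.differentiableOn one_ne_zero) hU_bound hPDE ht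
  have hL1 : ContinuousOn (fun t => ∑ i, |s t i - sstar t i| * m t i) (Icc 0 T) :=
    continuousOn_finsetSum _ fun i _ => (hdefect i).abs.mul (hm i)
  calc |U T (m 0 0) (m 0 1) - U 0 (m T 0) (m T 1)| = ‖g T - g 0‖ := by
        simp only [g, sub_self, sub_zero, Real.norm_eq_abs, abs_sub_comm]
    _ ≤ ∫ t in 0..T, lam * M * ∑ i, |s t i - sstar t i| * m t i :=
        norm_sub_le_integral_of_norm_deriv_le_of_le hT.le
          (continuousOn_reversedValue hU_smooth.continuousOn (hm 0) (hm 1))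
          (fun t ht => (hg' t ht).1.differentiableWithinAt)
          (Filter.Eventually.of_forall fun t ht => (hg' t ht).2)
          ((hL1.const_mul _).intervalIntegrable_of_Icc hT.le)
    _ = lam * M * ∫ t in 0..T, ∑ i, |s t i - sstar t i| * m t i :=
        intervalIntegral.integral_const_mul _ _
    _ ≤ lam * M * (√(T - 0) * ε) := by
        gcongr
        exact integral_sum_abs_mul_le_sqrt_mul (d := fun t i => s t i - sstar t i) hT.le hm
          hdefect (fun t ht i => (hpos t ht i).le) (by simpa only [Fin.sum_univ_two] using hsum)
          hε hscore
    _ = lam * M * √T * ε := by rw [sub_zero]; ring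
end
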